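/- arXiv:math/0605714 — 2 statements merged into one kernel-verified Lean document; each statement's English description precedes it below -/
import Mathlib

section
/- Let M be an ordinary module over a ring R and P ⊆ M a subset containing the zero of M. Define a hyperoperation on R × M by r P₊ x = r · (P + x) = { r·(p+x) : p ∈ P }. Then (M, +, P₊) is an Hv-module over R (with + the singleton-valued ordinary addition): the weak-associativity/weak-distributivity conditions (a P₊ (x+y)) ∩ (a P₊ x + a P₊ y) ≠ ∅, ((a+b) P₊ x) ∩ (a P₊ x + b P₊ x) ≠ ∅, and ((a·b) P₊ x) ∩ (a P₊ (b P₊ x)) ≠ ∅ hold for all a,b ∈ R, x,y ∈ M. -/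
/-- Sum of two subsets of a module. -/
def setSum {M : Type*} [Add M] (A B : Set M) : Set M := {m | ∃ a ∈ A, ∃ b ∈ B, m = a + b}

/-- Extension of an external hyperoperation to a set in the second argument. -/
def hSmulSet {R M : Type*} (h : R → M → Set M) (r : R) (S : Set M) : Set M :=
  ⋃ s ∈ S, h r s

/-- Let `M` be a module over a ring `R` and `P ⊆ M` with `0 ∈ P`.  The hyperoperation
`r P₊ x = r • (P + x) = { r • (p + x) : p ∈ P }` makes `(M, +, P₊)` an Hv-module over `R`:
the three weak compatibility conditions hold (each asserted intersection is nonempty). -/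
theorem hvModule_of_P_add {R M : Type*} [Ring R] [AddCommGroup M] [Module R M]
    (P : Set M) (hP : (0 : M) ∈ P) :
    let Pplus : R → M → Set M := fun r x => (fun p => r • (p + x)) '' P
    (∀ (a : R) (x y : M),
      (Pplus a (x + y) ∩ setSum (Pplus a x) (Pplus a y)).Nonempty) ∧
    (∀ (a b : R) (x : M),
      (Pplus (a + b) x ∩ setSum (Pplus a x) (Pplus b x)).Nonempty) ∧
    (∀ (a b : R) (x : M),
      (Pplus (a * b) x ∩ hSmulSet Pplus a (Pplus b x)).Nonempty) := by
  intro Pplus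
  have mem : ∀ (r : R) (x : M), r • x ∈ Pplus r x := fun r x =>
    ⟨0, hP, by simp⟩
  refine ⟨fun a x y => ⟨a • (x + y), mem a (x + y), a • x, mem a x, a • y, mem a y, by
      rw [smul_add]⟩,
    fun a b x => ⟨(a + b) • x, mem (a + b) x, a • x, mem a x, b • x, mem b x, by
      rw [add_smul]⟩,
    fun a b x => ⟨(a * b) • x, mem (a * b) x, ?_⟩⟩
  refine Set.mem_biUnion (mem b x) ?_
  have := mem a (b • x)
  rwa [mul_smul]
end

section
/- Let M be an ordinary module over a ring R with center Z(R), and P ⊆ R a subset such that there exists p ∈ P ∩ Z(R) with p² ∈ P. Define the external hyperoperation r P* x = (rP)·x = { (r·q)·x : q ∈ P }. Then (M, +, P*) is an Hv-module over R; in particular ((a·b) P* x) ∩ (a P* (b P* x)) ≠ ∅ for all a,b ∈ R, x ∈ M. -/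
/-- Let `M` be a module over a ring `R` and `P ⊆ R` such that some `p ∈ P` is central
with `p² ∈ P`.  The external hyperoperation `r P* x = (rP)·x = { (r * q) • x : q ∈ P }`
makes `(M, +, P*)` an Hv-module over `R`; in particular
`((a·b) P* x) ∩ (a P* (b P* x)) ≠ ∅` for all `a, b ∈ R`, `x ∈ M`. -/
theorem hvModule_of_P_star {R M : Type*} [Ring R] [AddCommGroup M] [Module R M]
    (P : Set R) (hP : ∃ p ∈ P, p ∈ Subring.center R ∧ p ^ 2 ∈ P) :
    let Pstar : R → M → Set M := fun r x => (fun q => (r * q) • x) '' P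
    (∀ (a : R) (x y : M),
      (Pstar a (x + y) ∩ setSum (Pstar a x) (Pstar a y)).Nonempty) ∧
    (∀ (a b : R) (x : M),
      (Pstar (a + b) x ∩ setSum (Pstar a x) (Pstar b x)).Nonempty) ∧
    (∀ (a b : R) (x : M),
      (Pstar (a * b) x ∩ hSmulSet Pstar a (Pstar b x)).Nonempty) := by

  obtain ⟨p, hpP, hpc, hp2⟩ := hP
  intro Pstar
  refine ⟨?_, ?_, ?_⟩
  · intro a x y
    refine ⟨(a * p) • (x + y), ⟨p, hpP, rfl⟩, (a * p) • x, ⟨p, hpP, rfl⟩,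
      (a * p) • y, ⟨p, hpP, rfl⟩, ?_⟩
    rw [smul_add]
  · intro a b x
    refine ⟨((a + b) * p) • x, ⟨p, hpP, rfl⟩, (a * p) • x, ⟨p, hpP, rfl⟩,
      (b * p) • x, ⟨p, hpP, rfl⟩, ?_⟩
    rw [← add_smul, add_mul]
  · intro a b x
    refine ⟨(a * b * p ^ 2) • x, ⟨p ^ 2, hp2, rfl⟩, ?_⟩
    refine Set.mem_biUnion (⟨p, hpP, rfl⟩ : (b * p) • x ∈ Pstar b x) ⟨p, hpP, ?_⟩
    show (a * p) • ((b * p) • x) = (a * b * p ^ 2) • x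
    rw [smul_smul]
    congr 1
    have hc := (Subring.mem_center_iff.mp hpc) b
    rw [sq, mul_assoc, ← mul_assoc p b p, ← hc, mul_assoc, mul_assoc]
end
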